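/- Let (a_n)_{n≥2} be complex numbers with ∑_{n=2}^∞ |a_n|²/(n(n²−1)) < ∞. Then the antiholomorphic function ψ(z̄) = ∑_{n=2}^∞ a_n z̄^{n−2} converges for |z|<1 and there is a constant C (namely C² = 6·∑|a_n|²/(n(n²−1))) such that (1−|z|²)² |ψ(z̄)| ≤ C for all z in the unit disk. -/

import Mathlib

/-!
Write `|ψ(z̄)| ≤ ∑ |a_m| r^m` with `r = |z|` and apply Cauchy–Schwarz with the Sobolev
weight `w_m = (m+2)((m+2)²-1) = (m+1)(m+2)(m+3)`, splitting
`|a_m| r^m = (|a_m|/√w_m)(√w_m r^m)`. The second factor gives an explicit series,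
`∑ w_m x^m = 6 ∑ C(m+3,3) x^m = 6/(1-x)^4`, so
`(∑ |a_m| r^m)² ≤ ‖ψ‖²_{-3/2} · 6/(1-r²)^4`, and the factor `(1-r²)^4` cancels.
-/

open scoped ComplexConjugate

/-- The weight of the `H^{-3/2}` norm at the coefficient `a_{m+2}`. -/
noncomputable def sobolevWeight (m : ℕ) : ℝ := ((m : ℝ) + 2) * (((m : ℝ) + 2) ^ 2 - 1)

lemma sobolevWeight_eq (m : ℕ) :
    sobolevWeight m = ((m : ℝ) + 1) * ((m : ℝ) + 2) * ((m : ℝ) + 3) := by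
  unfold sobolevWeight; ring

lemma sobolevWeight_pos (m : ℕ) : 0 < sobolevWeight m := by
  rw [sobolevWeight_eq]; positivity

lemma sobolevWeight_eq_six_mul_choose (m : ℕ) :
    sobolevWeight m = 6 * ((m + 3).choose 3 : ℝ) := by
  have h : 6 * (m + 3).choose 3 = (m + 1) * (m + 2) * (m + 3) := by
    rw [show 6 = Nat.factorial 3 from rfl, ← Nat.descFactorial_eq_factorial_mul_choose]
    simp only [Nat.descFactorial_succ, Nat.descFactorial_zero]
    lia
  rw [sobolevWeight_eq]
  exact_mod_cast h.symm

lemma hasSum_sobolevWeight_mul_geometric {x : ℝ} (hx : |x| < 1) :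
    HasSum (fun m => sobolevWeight m * x ^ m) (6 / (1 - x) ^ 4) := by
  rw [show (6 : ℝ) / (1 - x) ^ 4 = 6 * (1 / (1 - x) ^ (3 + 1)) by ring]
  simp_rw [sobolevWeight_eq_six_mul_choose, mul_assoc]
  exact (hasSum_choose_mul_geometric_of_norm_lt_one 3 (r := x) hx).mul_left 6

/-- Cauchy–Schwarz for series, with `r i` standing in for `√(f i * g i)`. -/
lemma Summable.of_sq_le_mul_and_sq_tsum_le {ι : Type*} {r f g : ι → ℝ}
    (hr : ∀ i, 0 ≤ r i) (hf : ∀ i, 0 ≤ f i) (hg : ∀ i, 0 ≤ g i)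
    (hrfg : ∀ i, r i ^ 2 ≤ f i * g i)
    (hfs : Summable f) (hgs : Summable g) :
    Summable r ∧ (∑' i, r i) ^ 2 ≤ (∑' i, f i) * ∑' i, g i := by
  have hrs : Summable r := by
    refine ((hfs.add hgs).div_const 2).of_nonneg_of_le hr fun i => ?_
    have := two_mul_le_add_of_sq_le_mul (hf i) (hg i) (hrfg i)
    linarith
  refine ⟨hrs, le_of_tendsto' (hrs.hasSum.pow 2) fun s => ?_⟩
  calc (∑ i ∈ s, r i) ^ 2 ≤ (∑ i ∈ s, f i) * ∑ i ∈ s, g i :=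
        Finset.sum_sq_le_sum_mul_sum_of_sq_le_mul s (fun i _ => hf i) (fun i _ => hg i)
          fun i _ => hrfg i
    _ ≤ (∑' i, f i) * ∑' i, g i :=
        mul_le_mul (hfs.sum_le_tsum s fun i _ => hf i) (hgs.sum_le_tsum s fun i _ => hg i)
          (Finset.sum_nonneg fun i _ => hg i) (tsum_nonneg hf)

lemma summable_norm_mul_pow_and_sq_tsum_le {E : Type*} [SeminormedAddCommGroup E]
    {a : ℕ → E} (ha : Summable fun m => ‖a m‖ ^ 2 / sobolevWeight m)
    {r : ℝ} (hr₀ : 0 ≤ r) (hr₁ : r < 1) :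
    Summable (fun m => ‖a m‖ * r ^ m) ∧
      (∑' m, ‖a m‖ * r ^ m) ^ 2 ≤
        (∑' m, ‖a m‖ ^ 2 / sobolevWeight m) * (6 / (1 - r ^ 2) ^ 4) := by
  have hgeom := hasSum_sobolevWeight_mul_geometric (x := r ^ 2) (by
    rw [abs_of_nonneg (by positivity)]; nlinarith)
  rw [← hgeom.tsum_eq]
  refine Summable.of_sq_le_mul_and_sq_tsum_le (fun m => by positivity)
    (fun m => div_nonneg (sq_nonneg _) (sobolevWeight_pos m).le)
    (fun m => mul_nonneg (sobolevWeight_pos m).le (by positivity)) (fun m => ?_) ha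
    hgeom.summable
  apply le_of_eq
  field_simp [(sobolevWeight_pos m).ne']
  ring

/-- If `∑_{n≥2} |a_n|²/(n(n²−1)) < ∞` then the antiholomorphic function
`ψ(z̄) = ∑_{n≥2} a_n z̄^{n−2}` converges on the unit disk and
`(1−|z|²)² |ψ(z̄)| ≤ C` with `C² = 6 ∑_{n≥2} |a_n|²/(n(n²−1))`.
(The coefficient `a (m)` stands for `a_{m+2}`.) -/
theorem stmt1 (a : ℕ → ℂ)
    (ha : Summable fun m : ℕ =>
      ‖a m‖ ^ 2 / (((m : ℝ) + 2) * (((m : ℝ) + 2) ^ 2 - 1))) :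
    ∀ z : ℂ, ‖z‖ < 1 →
      Summable (fun m : ℕ => a m * (conj z) ^ m) ∧
      (1 - ‖z‖ ^ 2) ^ 2 * ‖∑' m : ℕ, a m * (conj z) ^ m‖ ≤
        Real.sqrt (6 * ∑' m : ℕ,
          ‖a m‖ ^ 2 / (((m : ℝ) + 2) * (((m : ℝ) + 2) ^ 2 - 1))) := by
  intro z hz
  obtain ⟨hsum, hsq⟩ := summable_norm_mul_pow_and_sq_tsum_le ha (norm_nonneg z) hz
  have hnorm (m : ℕ) : ‖a m * conj z ^ m‖ = ‖a m‖ * ‖z‖ ^ m := by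
    rw [norm_mul, norm_pow, RCLike.norm_conj]
  have hsum_norm : Summable fun m => ‖a m * conj z ^ m‖ := by simpa only [hnorm] using hsum
  refine ⟨hsum_norm.of_norm, Real.le_sqrt_of_sq_le ?_⟩
  have hψ : ‖∑' m, a m * conj z ^ m‖ ≤ ∑' m, ‖a m‖ * ‖z‖ ^ m :=
    (norm_tsum_le_tsum_norm hsum_norm).trans_eq (tsum_congr hnorm)
  have hz₂ : 0 < 1 - ‖z‖ ^ 2 := by nlinarith [norm_nonneg z]
  calc ((1 - ‖z‖ ^ 2) ^ 2 * ‖∑' m, a m * conj z ^ m‖) ^ 2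
      ≤ (1 - ‖z‖ ^ 2) ^ 4 * (∑' m, ‖a m‖ * ‖z‖ ^ m) ^ 2 := by
        rw [mul_pow, ← pow_mul]; gcongr
    _ ≤ (1 - ‖z‖ ^ 2) ^ 4 *
          ((∑' m, ‖a m‖ ^ 2 / sobolevWeight m) * (6 / (1 - ‖z‖ ^ 2) ^ 4)) := by
        gcongr
    _ = 6 * ∑' m, ‖a m‖ ^ 2 / sobolevWeight m := by field_simp
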